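/- Core determinant inequality: let β > 0 and define h(x) = (e^{βx} − 1)/(x·e^{βx/2}) for x > 0 and h(0) = β. Then for all u, v, w > 0 one has h(v)·h(u+v+w) > h(u)·h(w); equivalently, u·w·(e^{(u+v+w)β} − 1)·(e^{vβ} − 1) > v·(u+v+w)·(e^{wβ} − 1)·(e^{uβ} − 1)·e^{vβ}. -/

import Mathlib

open Real

/-- `h(x) = (e^{βx} − 1)/(x·e^{βx/2})` for `x > 0`, with `h(0) = β`. -/
noncomputable def hfun (β x : ℝ) : ℝ :=
  if x = 0 then β else (Real.exp (β * x) - 1) / (x * Real.exp (β * x / 2))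

/-!
Writing `t = βx/2`, one has `h(x) = β · sinh t / t`, so with `a, b, c = βu/2, βv/2, βw/2` the
claim becomes `S(a) S(c) < S(b) S(a + b + c)` for `S(t) = sinh t / t`. This follows from three
facts about `S` on `(0, ∞)`: it is supermultiplicative, `S(a) S(c) < S(a + c)` (expand
`sinh (a + c)` and use `sinh t < t cosh t`); it is strictly increasing; and `S(b) > 1`.
The exponential form is the same inequality with the denominators cleared.
-/

namespace Real

lemma sinh_lt_mul_cosh {x : ℝ} (hx : 0 < x) : sinh x < x * cosh x := by
  have hmono : StrictMonoOn (fun y => y * cosh y - sinh y) (Set.Ici 0) := by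
    refine strictMonoOn_of_hasDerivWithinAt_pos (convex_Ici 0) (by fun_prop)
      (fun y _ => ?_) (f' := fun y => y * sinh y) (fun y hy => ?_)
    · have hd := ((hasDerivAt_id' y).mul (hasDerivAt_cosh y)).sub (hasDerivAt_sinh y)
      exact (hd.congr_deriv (by ring)).hasDerivWithinAt
    · rw [interior_Ici, Set.mem_Ioi] at hy
      exact mul_pos hy (sinh_pos_iff.2 hy)
  simpa using hmono Set.self_mem_Ici hx.le hx

lemma strictMonoOn_sinh_div : StrictMonoOn (fun x => sinh x / x) (Set.Ioi 0) := by
  refine strictMonoOn_of_hasDerivWithinAt_pos (convex_Ioi 0)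
    (continuous_sinh.continuousOn.div continuousOn_id fun x hx => hx.ne')
    (fun x hx => ?_) (f' := fun x => (cosh x * x - sinh x * 1) / x ^ 2) (fun x hx => ?_)
    <;> rw [interior_Ioi, Set.mem_Ioi] at hx
  · exact ((hasDerivAt_sinh x).div (hasDerivAt_id x) hx.ne').hasDerivWithinAt
  · have := sinh_lt_mul_cosh hx
    exact div_pos (by linarith) (by positivity)

lemma sinh_div_mul_sinh_div_lt_sinh_add_div {a c : ℝ} (ha : 0 < a) (hc : 0 < c) :
    sinh a / a * (sinh c / c) < sinh (a + c) / (a + c) := by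
  have hsa := sinh_pos_iff.2 ha
  have hsc := sinh_pos_iff.2 hc
  have ka := mul_lt_mul_of_pos_left (sinh_lt_mul_cosh ha) (mul_pos hc hsc)
  have kc := mul_lt_mul_of_pos_left (sinh_lt_mul_cosh hc) (mul_pos ha hsa)
  rw [div_mul_div_comm, div_lt_div_iff₀ (by positivity) (by positivity), sinh_add]
  linarith

lemma sinh_div_mul_sinh_div_lt {a b c : ℝ} (ha : 0 < a) (hb : 0 < b) (hc : 0 < c) :
    sinh a / a * (sinh c / c) < sinh b / b * (sinh (a + b + c) / (a + b + c)) := by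
  have hS : 0 < sinh (a + b + c) / (a + b + c) := by
    have := sinh_pos_iff.2 (show 0 < a + b + c by positivity)
    positivity
  calc sinh a / a * (sinh c / c) < sinh (a + c) / (a + c) :=
        sinh_div_mul_sinh_div_lt_sinh_add_div ha hc
    _ < sinh (a + b + c) / (a + b + c) := by
        exact strictMonoOn_sinh_div (show 0 < a + c by positivity)
          (show 0 < a + b + c by positivity) (by linarith)
    _ < sinh b / b * (sinh (a + b + c) / (a + b + c)) := by
        refine lt_mul_of_one_lt_left hS ?_
        rw [one_lt_div hb]
        exact self_lt_sinh_iff.2 hb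

lemma exp_sub_one_eq_two_mul_exp_half_mul_sinh_half (x : ℝ) :
    exp x - 1 = 2 * exp (x / 2) * sinh (x / 2) := by
  have hsplit : exp x = exp (x / 2) * exp (x / 2) := by rw [← exp_add, add_halves]
  rw [sinh_eq, exp_neg, hsplit]
  field_simp

end Real

lemma hfun_eq_mul_sinh_div {β x : ℝ} (hβ : β ≠ 0) (hx : x ≠ 0) :
    hfun β x = β * (sinh (β * x / 2) / (β * x / 2)) := by
  rw [hfun, if_neg hx, exp_sub_one_eq_two_mul_exp_half_mul_sinh_half]
  field_simp

lemma exp_sub_one_mul_lt_of_hfun_mul_hfun_lt {β u v w : ℝ} (hu : 0 < u) (hv : 0 < v) (hw : 0 < w)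
    (h : hfun β u * hfun β w < hfun β v * hfun β (u + v + w)) :
    v * (u + v + w) * (exp (w * β) - 1) * (exp (u * β) - 1) * exp (v * β) <
      u * w * (exp ((u + v + w) * β) - 1) * (exp (v * β) - 1) := by
  have hs : 0 < u + v + w := by positivity
  simp only [hfun, if_neg hu.ne', if_neg hv.ne', if_neg hw.ne', if_neg hs.ne'] at h
  rw [div_mul_div_comm, div_mul_div_comm, div_lt_div_iff₀ (by positivity) (by positivity)] at h
  rw [mul_comm (u + v + w) β, mul_comm u β, mul_comm v β, mul_comm w β]
  have hhalf : exp (β * v / 2) * exp (β * (u + v + w) / 2) =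
      exp (β * u / 2) * exp (β * w / 2) * exp (β * v) := by
    rw [← exp_add, ← exp_add, ← exp_add]; ring_nf
  refine lt_of_mul_lt_mul_right ?_ (by positivity : 0 ≤ exp (β * u / 2) * exp (β * w / 2))
  linear_combination h - (v * (u + v + w) * (exp (β * w) - 1) * (exp (β * u) - 1)) * hhalf

/-- **Core determinant inequality.** For all `β > 0` and `u, v, w > 0`,
`h(v)·h(u+v+w) > h(u)·h(w)`; equivalently,
`u·w·(e^{(u+v+w)β} − 1)·(e^{vβ} − 1) > v·(u+v+w)·(e^{wβ} − 1)·(e^{uβ} − 1)·e^{vβ}`. -/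
theorem core_determinant_inequality (β u v w : ℝ) (hβ : 0 < β)
    (hu : 0 < u) (hv : 0 < v) (hw : 0 < w) :
    hfun β v * hfun β (u + v + w) > hfun β u * hfun β w ∧
      u * w * (Real.exp ((u + v + w) * β) - 1) * (Real.exp (v * β) - 1) >
        v * (u + v + w) * (Real.exp (w * β) - 1) * (Real.exp (u * β) - 1) *
          Real.exp (v * β) := by
  have hfun_lt : hfun β u * hfun β w < hfun β v * hfun β (u + v + w) := by
    rw [hfun_eq_mul_sinh_div hβ.ne' hu.ne', hfun_eq_mul_sinh_div hβ.ne' hv.ne',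
      hfun_eq_mul_sinh_div hβ.ne' hw.ne', hfun_eq_mul_sinh_div hβ.ne' (by positivity),
      show β * (u + v + w) / 2 = β * u / 2 + β * v / 2 + β * w / 2 by ring]
    have key := sinh_div_mul_sinh_div_lt (a := β * u / 2) (b := β * v / 2) (c := β * w / 2)
      (by positivity) (by positivity) (by positivity)
    linear_combination (β * β) * key
  exact ⟨hfun_lt, exp_sub_one_mul_lt_of_hfun_mul_hfun_lt hu hv hw hfun_lt⟩
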